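/- arXiv:2504.18434 — 3 statements merged into one kernel-verified Lean document; each statement's English description precedes it below -/
import Mathlib

section
/- Let n be a prime, let k satisfy 2 ≤ k < n, and let A be a k-element subset of Z/nZ. Fix two distinct elements x, y ∈ A and set g = y − x ∈ Z/nZ. Define, for each p ∈ Z/nZ, the vertex v_p = x + p·g and the hyperedge E_p = A + p·g = {a + p·g : a ∈ A}. Then: (i) the map p ↦ v_p is a bijection of Z/nZ onto itself (the vertices v_0, v_1, ..., v_{n−1} are all of the n vertices, each exactly once); (ii) the hyperedges E_0, E_1, ..., E_{n−1} are pairwise distinct; (iii) for every p, both v_p ∈ E_p and v_{p+1} ∈ E_p. Hence (v_0, E_0, v_1, E_1, ..., v_{n−1}, E_{n−1}, v_0) is a Hamiltonian Berge cycle in the complete k-uniform hypergraph on vertex set Z/nZ whose hyperedge set is the translation orbit of A. (Lemma 1: for each generator g in the constructed set, the corresponding cycle S_g is Hamiltonian.) -/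
/-- Lemma 1: let `n` be prime, `2 ≤ k < n`, `A` a `k`-subset of `ZMod n`, and
`x ≠ y` two elements of `A`; set `g = y - x`, `v p = x + p * g`, and
`E p = A + p * g`. Then (i) `p ↦ v p` is a bijection of `ZMod n`,
(ii) the hyperedges `E p` are pairwise distinct, and (iii) `v p ∈ E p` and
`v (p+1) ∈ E p` for every `p`; hence `(v_0, E_0, …, v_{n-1}, E_{n-1}, v_0)` is a
Hamiltonian Berge cycle whose hyperedge set is the translation orbit of `A`. -/
theorem generator_cycle_hamiltonian (n k : ℕ) (hp : n.Prime) (hk2 : 2 ≤ k)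
    (hkn : k < n) (A : Finset (ZMod n)) (hA : A.card = k)
    (x y : ZMod n) (hx : x ∈ A) (hy : y ∈ A) (hxy : x ≠ y) :
    Function.Bijective (fun p : ZMod n => x + p * (y - x)) ∧
    Function.Injective (fun p : ZMod n => A.image (· + p * (y - x))) ∧
    (∀ p : ZMod n,
      x + p * (y - x) ∈ A.image (· + p * (y - x)) ∧
      x + (p + 1) * (y - x) ∈ A.image (· + p * (y - x))) := by
  haveI : Fact n.Prime := ⟨hp⟩
  have hg : y - x ≠ 0 := sub_ne_zero.mpr (Ne.symm hxy)
  have hinj : Function.Injective (fun p : ZMod n => x + p * (y - x)) := by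
    intro p q h
    simp only at h
    have := add_left_cancel h
    exact mul_right_cancel₀ hg this
  refine ⟨⟨hinj, Finite.surjective_of_injective hinj⟩, ?_, ?_⟩
  · intro p q h
    simp only at h
    have hsum : ∑ a ∈ A, (a + p * (y - x)) = ∑ a ∈ A, (a + q * (y - x)) := by
      have h1 : ∑ a ∈ A, (a + p * (y - x)) =
          ∑ b ∈ A.image (· + p * (y - x)), b := by
        rw [Finset.sum_image (fun a _ b _ h => by simpa using h)]
      have h2 : ∑ a ∈ A, (a + q * (y - x)) =
          ∑ b ∈ A.image (· + q * (y - x)), b := by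
        rw [Finset.sum_image (fun a _ b _ h => by simpa using h)]
      rw [h1, h2, h]
    rw [Finset.sum_add_distrib, Finset.sum_add_distrib, Finset.sum_const,
      Finset.sum_const, hA] at hsum
    have hk : (k : ZMod n) ≠ 0 := by
      rw [Ne, ZMod.natCast_eq_zero_iff]
      exact fun hd => absurd (Nat.le_of_dvd (by omega) hd) (by omega)
    have : (k : ZMod n) • (p * (y - x)) = (k : ZMod n) • (q * (y - x)) := by
      simpa [nsmul_eq_mul] using add_left_cancel hsum
    simp only [smul_eq_mul] at this
    have := mul_left_cancel₀ hk this
    exact mul_right_cancel₀ hg this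
  · intro p
    constructor
    · exact Finset.mem_image.mpr ⟨x, hx, rfl⟩
    · exact Finset.mem_image.mpr ⟨y, hy, by ring⟩
end

section
/- Let n be a prime and let k satisfy 2 ≤ k and 2k < n. Set N = C(n,k)/n (which is an integer). Then there exist N families U_1, ..., U_N of k-element subsets of Z/nZ such that: (i) the U_i are pairwise disjoint; (ii) their union is the collection of all C(n,k) k-element subsets of Z/nZ; (iii) each U_i contains exactly n subsets; and (iv) each U_i is the hyperedge set of a Hamiltonian Berge cycle, i.e., there is an enumeration v_1, ..., v_n of all the vertices and an enumeration E_1, ..., E_n of the n distinct members of U_i with v_j ∈ E_j and v_{j+1} ∈ E_j for all j (indices modulo n). (Theorem 1: the complete k-uniform hypergraph K_n^k admits a Hamiltonian decomposition for all primes n and all k < n/2.) -/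
/-- A family `U` of `k`-element subsets of `ZMod n` is the hyperedge set of a
Hamiltonian Berge cycle if there are an enumeration `v` of all the vertices
(each exactly once) and an enumeration `E` of the members of `U` without
repetition such that each `E j` contains both `v j` and `v (j + 1)`
(indices cyclic). -/
def IsHamiltonianBergeCycle (n : ℕ) (U : Finset (Finset (ZMod n))) : Prop :=
  ∃ (v : ZMod n → ZMod n) (E : ZMod n → Finset (ZMod n)),
    Function.Bijective v ∧ Function.Injective E ∧
    (∀ j, E j ∈ U) ∧ (∀ A ∈ U, ∃ j, E j = A) ∧
    (∀ j, v j ∈ E j ∧ v (j + 1) ∈ E j)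

namespace HDaux

variable {n : ℕ}

/-- Translation of a finite subset of `ZMod n` by `t`. -/
def shift (t : ZMod n) (A : Finset (ZMod n)) : Finset (ZMod n) := A.image (· + t)

lemma mem_shift {t x : ZMod n} {A : Finset (ZMod n)} :
    x ∈ shift t A ↔ x - t ∈ A := by
  simp only [shift, Finset.mem_image]
  constructor
  · rintro ⟨a, ha, rfl⟩; simpa using ha
  · intro h; exact ⟨x - t, h, by ring⟩

lemma shift_shift (s t : ZMod n) (A : Finset (ZMod n)) :
    shift s (shift t A) = shift (t + s) A := by
  ext x; simp [mem_shift, sub_sub, add_comm s t]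

lemma shift_zero (A : Finset (ZMod n)) : shift (0 : ZMod n) A = A := by
  ext x; simp [mem_shift]

lemma card_shift (t : ZMod n) (A : Finset (ZMod n)) : (shift t A).card = A.card :=
  Finset.card_image_of_injective _ (add_left_injective t)

lemma shift_eq_self [Fact n.Prime] {t : ZMod n} {A : Finset (ZMod n)}
    (h0 : A.Nonempty) (hlt : A.card < n) (h : shift t A = A) : t = 0 := by
  by_contra ht
  obtain ⟨a, ha⟩ := h0
  have hstep : ∀ x ∈ A, x + t ∈ A := by
    intro x hx
    rw [← h, mem_shift]; simpa using hx
  have hm : ∀ m : ℕ, a + (m : ZMod n) * t ∈ A := by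
    intro m
    induction m with
    | zero => simpa using ha
    | succ m ih =>
      have := hstep _ ih
      push_cast
      convert this using 1
      ring
  have hall : ∀ x : ZMod n, x ∈ A := by
    intro x
    have := hm ((x - a) * t⁻¹).val
    rwa [ZMod.natCast_val, ZMod.cast_id, mul_assoc, inv_mul_cancel₀ ht, mul_one,
      add_sub_cancel] at this
  have : A = Finset.univ := Finset.eq_univ_iff_forall.mpr hall
  rw [this, Finset.card_univ, ZMod.card] at hlt
  exact lt_irrefl _ hlt

lemma shift_injective [Fact n.Prime] {A : Finset (ZMod n)}
    (h0 : A.Nonempty) (hlt : A.card < n) :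
    Function.Injective (fun t => shift t A) := by
  intro s t hst
  have h2 : shift (s + -t) A = shift (t + -t) A := by
    rw [← shift_shift, ← shift_shift]; simp only at hst; rw [hst]
  rw [add_neg_cancel, shift_zero] at h2
  have := shift_eq_self h0 hlt h2
  linear_combination this

/-- The translation orbit of a finite subset of `ZMod n`. -/
def orbit [NeZero n] (A : Finset (ZMod n)) : Finset (Finset (ZMod n)) :=
  Finset.univ.image (fun t => shift t A)

lemma mem_orbit {A B : Finset (ZMod n)} [NeZero n] :
    B ∈ orbit A ↔ ∃ t, shift t A = B := by
  simp [orbit]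

lemma self_mem_orbit [NeZero n] (A : Finset (ZMod n)) : A ∈ orbit A :=
  mem_orbit.mpr ⟨0, shift_zero A⟩

lemma orbit_shift [NeZero n] (t : ZMod n) (A : Finset (ZMod n)) :
    orbit (shift t A) = orbit A := by
  ext B
  simp only [mem_orbit]
  constructor
  · rintro ⟨s, rfl⟩; exact ⟨t + s, (shift_shift s t A).symm⟩
  · rintro ⟨s, rfl⟩
    exact ⟨s - t, by rw [shift_shift, add_sub_cancel]⟩

lemma orbit_eq_of_mem [NeZero n] {A B : Finset (ZMod n)} (h : B ∈ orbit A) :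
    orbit B = orbit A := by
  obtain ⟨t, rfl⟩ := mem_orbit.mp h
  exact orbit_shift t A

lemma card_orbit [NeZero n] [Fact n.Prime] {A : Finset (ZMod n)}
    (h0 : A.Nonempty) (hlt : A.card < n) : (orbit A).card = n := by
  rw [orbit, Finset.card_image_of_injective _ (shift_injective h0 hlt),
    Finset.card_univ, ZMod.card]

lemma ham [NeZero n] [Fact n.Prime] {A : Finset (ZMod n)}
    (h0 : A.Nonempty) (hlt : A.card < n) (h2 : 1 < A.card) :
    IsHamiltonianBergeCycle n (orbit A) := by
  obtain ⟨a, ha, b, hb, hab⟩ := Finset.one_lt_card.mp h2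
  set d := b - a with hd
  have hdne : d ≠ 0 := sub_ne_zero.mpr (Ne.symm hab)
  refine ⟨fun j => d * j, fun j => shift (d * j - a) A, ?_, ?_, ?_, ?_, ?_⟩
  · exact Finite.injective_iff_bijective.mp (mul_right_injective₀ hdne)
  · intro j1 j2 hj
    have h' : d * j1 - a = d * j2 - a := shift_injective h0 hlt hj
    have h'' : d * j1 = d * j2 := by linear_combination h'
    exact mul_left_cancel₀ hdne h''
  · intro j; exact mem_orbit.mpr ⟨_, rfl⟩
  · intro B hB
    obtain ⟨t, rfl⟩ := mem_orbit.mp hB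
    refine ⟨d⁻¹ * (t + a), ?_⟩
    field_simp
    rw [add_sub_cancel_right]
  · intro j
    constructor
    · rw [mem_shift]
      convert ha using 2
      ring
    · rw [mem_shift]
      convert hb using 2
      rw [hd]; ring

end HDaux

/-- Theorem 1: for every prime `n` and every `k` with `2 ≤ k` and `2k < n`, the
complete `k`-uniform hypergraph on `ZMod n` admits a Hamiltonian decomposition:
`n ∣ C(n,k)`, and with `N = C(n,k)/n` there are `N` pairwise disjoint families of
`k`-subsets, each of size `n`, whose union is the collection of all `k`-subsets,
each family being the hyperedge set of a Hamiltonian Berge cycle. -/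
theorem hamiltonian_decomposition_exists (n k : ℕ) (hp : n.Prime)
    (hk2 : 2 ≤ k) (hkn : 2 * k < n) :
    n ∣ Nat.choose n k ∧
    ∃ U : Fin (Nat.choose n k / n) → Finset (Finset (ZMod n)),
      (∀ i j, i ≠ j → Disjoint (U i) (U j)) ∧
      (∀ A : Finset (ZMod n), A.card = k ↔ ∃ i, A ∈ U i) ∧
      (∀ i, (U i).card = n) ∧
      (∀ i, IsHamiltonianBergeCycle n (U i)) := by
  haveI : Fact n.Prime := ⟨hp⟩
  haveI : NeZero n := ⟨hp.ne_zero⟩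
  have hkpos : 0 < k := by omega
  have hklt : k < n := by omega
  -- facts about k-subsets
  have hcardA : ∀ {A : Finset (ZMod n)}, A.card = k →
      A.Nonempty ∧ A.card < n ∧ 1 < A.card := by
    intro A hA
    refine ⟨Finset.card_pos.mp (by omega), by omega, by omega⟩
  -- the set of all k-subsets
  set S : Finset (Finset (ZMod n)) := Finset.univ.powersetCard k with hS
  have hmemS : ∀ A : Finset (ZMod n), A ∈ S ↔ A.card = k := by
    intro A
    simp [hS, Finset.mem_powersetCard]
  have hScard : S.card = Nat.choose n k := by
    rw [hS, Finset.card_powersetCard, Finset.card_univ, ZMod.card]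
  -- the set of orbits
  set T : Finset (Finset (Finset (ZMod n))) := S.image HDaux.orbit with hT
  have hmemT : ∀ O ∈ T, ∃ A, A.card = k ∧ HDaux.orbit A = O := by
    intro O hO
    obtain ⟨A, hA, rfl⟩ := Finset.mem_image.mp hO
    exact ⟨A, (hmemS A).mp hA, rfl⟩
  -- orbits have card k elements
  have horbmem : ∀ {A B : Finset (ZMod n)}, A.card = k → B ∈ HDaux.orbit A →
      B.card = k := by
    intro A B hA hB
    obtain ⟨t, rfl⟩ := HDaux.mem_orbit.mp hB
    rw [HDaux.card_shift, hA]
  -- S is the disjoint union of the orbits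
  have hSbU : S = T.biUnion id := by
    ext A
    simp only [Finset.mem_biUnion, id]
    constructor
    · intro hA
      exact ⟨HDaux.orbit A, Finset.mem_image_of_mem _ hA, HDaux.self_mem_orbit A⟩
    · rintro ⟨O, hO, hAO⟩
      obtain ⟨B, hB, rfl⟩ := hmemT O hO
      exact (hmemS A).mpr (horbmem hB hAO)
  have hdisj : ∀ O1 ∈ T, ∀ O2 ∈ T, O1 ≠ O2 → Disjoint O1 O2 := by
    intro O1 hO1 O2 hO2 hne
    rw [Finset.disjoint_left]
    intro C hC1 hC2
    obtain ⟨A, hA, rfl⟩ := hmemT O1 hO1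
    obtain ⟨B, hB, rfl⟩ := hmemT O2 hO2
    exact hne ((HDaux.orbit_eq_of_mem hC1).symm.trans (HDaux.orbit_eq_of_mem hC2))
  have hcardO : ∀ O ∈ T, O.card = n := by
    intro O hO
    obtain ⟨A, hA, rfl⟩ := hmemT O hO
    obtain ⟨h0, hlt, -⟩ := hcardA hA
    exact HDaux.card_orbit h0 hlt
  -- counting
  have hcount : Nat.choose n k = T.card * n := by
    rw [← hScard, hSbU, Finset.card_biUnion (fun O hO P hP h => by
      exact hdisj O hO P hP h)]
    rw [Finset.sum_congr rfl (fun O hO => by simpa using hcardO O hO)]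
    simp [mul_comm]
  have hdvd : n ∣ Nat.choose n k := ⟨T.card, by rw [hcount, mul_comm]⟩
  refine ⟨hdvd, ?_⟩
  have hNT : Nat.choose n k / n = T.card := by
    rw [hcount, Nat.mul_div_cancel _ hp.pos]
  -- index the orbits
  refine ⟨fun i => (T.equivFin.symm (Fin.cast hNT i) : Finset (Finset (ZMod n))),
    ?_, ?_, ?_, ?_⟩
  · intro i j hij
    apply hdisj _ (T.equivFin.symm (Fin.cast hNT i)).2 _
      (T.equivFin.symm (Fin.cast hNT j)).2
    intro h
    apply hij
    have := T.equivFin.symm.injective (Subtype.ext h)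
    exact Fin.cast_injective hNT this
  · intro A
    constructor
    · intro hA
      have hO : HDaux.orbit A ∈ T := Finset.mem_image_of_mem _ ((hmemS A).mpr hA)
      refine ⟨Fin.cast hNT.symm (T.equivFin ⟨HDaux.orbit A, hO⟩), ?_⟩
      show A ∈ ((T.equivFin.symm (T.equivFin ⟨HDaux.orbit A, hO⟩) : {x // x ∈ T}) :
        Finset (Finset (ZMod n)))
      rw [Equiv.symm_apply_apply]
      exact HDaux.self_mem_orbit A
    · rintro ⟨i, hi⟩
      obtain ⟨B, hB, hBO⟩ := hmemT _ (T.equivFin.symm (Fin.cast hNT i)).2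
      have hi' : A ∈ ((T.equivFin.symm (Fin.cast hNT i) : {x // x ∈ T}) :
        Finset (Finset (ZMod n))) := hi
      rw [← hBO] at hi'
      exact horbmem hB hi'
  · intro i
    exact hcardO _ (T.equivFin.symm (Fin.cast hNT i)).2
  · intro i
    obtain ⟨B, hB, hBO⟩ := hmemT _ (T.equivFin.symm (Fin.cast hNT i)).2
    show IsHamiltonianBergeCycle n
      ((T.equivFin.symm (Fin.cast hNT i) : {x // x ∈ T}) : Finset (Finset (ZMod n)))
    rw [← hBO]
    obtain ⟨h0, hlt, h2⟩ := hcardA hB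
    exact HDaux.ham h0 hlt h2
end

section
/- Let n be a prime and let k satisfy 2 ≤ k < n. Then the translation orbits {A + c : c ∈ Z/nZ}, as A ranges over the k-element subsets of Z/nZ, partition the collection of all k-element subsets of Z/nZ; each orbit contains exactly n subsets; and each orbit is the hyperedge set of a Hamiltonian Berge cycle on the vertex set Z/nZ. (Explicit orbit-based form of Theorem 1: the constructed decomposition consists exactly of the translation orbits, each of which is Hamiltonian.) -/
/-- The translation orbit of a subset `A` of `ZMod n`: all translates `A + c`. -/
def translationOrbit (n : ℕ) [NeZero n] (A : Finset (ZMod n)) :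
    Finset (Finset (ZMod n)) :=
  Finset.image (fun c => Finset.image (· + c) A) Finset.univ

lemma trans_comp {n : ℕ} (A : Finset (ZMod n)) (c c' : ZMod n) :
    Finset.image (· + c') (Finset.image (· + c) A) = Finset.image (· + (c + c')) A := by
  rw [Finset.image_image]
  congr 1
  funext x
  simp [add_assoc]

lemma stab_triv {n : ℕ} (hp : n.Prime) (A : Finset (ZMod n)) (hA : A.Nonempty)
    (hcard : A.card < n) {c : ZMod n} (h : Finset.image (· + c) A = A) : c = 0 := by
  haveI : Fact n.Prime := ⟨hp⟩
  by_contra hc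
  obtain ⟨a, ha⟩ := hA
  have step : ∀ x ∈ A, x + c ∈ A := fun x hx => h ▸ Finset.mem_image_of_mem _ hx
  have iter : ∀ m : ℕ, a + (m : ZMod n) * c ∈ A := by
    intro m
    induction m with
    | zero => simpa using ha
    | succ m ih =>
      have h2 := step _ ih
      have e : a + ((m + 1 : ℕ) : ZMod n) * c = a + (m : ZMod n) * c + c := by
        push_cast; ring
      rw [e]; exact h2
  have huniv : ∀ x : ZMod n, x ∈ A := by
    intro x
    have := iter ((x - a) * c⁻¹).val
    rwa [ZMod.natCast_val, ZMod.cast_id, mul_assoc, inv_mul_cancel₀ hc, mul_one,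
      add_sub_cancel] at this
  have : A = Finset.univ := Finset.eq_univ_of_forall huniv
  rw [this, Finset.card_univ, ZMod.card] at hcard
  exact lt_irrefl _ hcard

section Main

variable {n : ℕ}

/-- translation injectivity on subsets with trivial stabilizer -/
lemma trans_inj (hp : n.Prime) (A : Finset (ZMod n)) (hA : A.Nonempty)
    (hcard : A.card < n) : Function.Injective (fun c => Finset.image (· + c) A) := by
  intro c c' h
  simp only at h
  have h2 : Finset.image (· + (c + -c')) A = A := by
    rw [← trans_comp A c (-c'), h, trans_comp]
    simp
  have := stab_triv hp A hA hcard h2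
  linear_combination this

/-- orbit of a translate equals the orbit -/
lemma orbit_trans [NeZero n] (A : Finset (ZMod n)) (c : ZMod n) :
    Finset.image (fun c' => Finset.image (· + c') (Finset.image (· + c) A)) Finset.univ
      = Finset.image (fun c' => Finset.image (· + c') A) Finset.univ := by
  ext B
  simp only [Finset.mem_image, Finset.mem_univ, true_and]
  constructor
  · rintro ⟨c', rfl⟩
    exact ⟨c + c', (trans_comp A c c').symm⟩
  · rintro ⟨c', rfl⟩
    exact ⟨c' - c, by rw [trans_comp, add_sub_cancel]⟩

end Main

/-- Orbit-based form of Theorem 1: for `n` prime and `2 ≤ k < n`, the translation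
orbits of `k`-element subsets of `ZMod n` consist of `k`-subsets, cover every
`k`-subset, are pairwise equal or disjoint (hence partition the `k`-subsets), each
orbit has exactly `n` members, and each orbit is the hyperedge set of a Hamiltonian
Berge cycle. -/
theorem translation_orbits_hamiltonian_decomposition (n k : ℕ) (hp : n.Prime)
    (hk2 : 2 ≤ k) (hkn : k < n) :
    letI : NeZero n := ⟨hp.ne_zero⟩
    ∀ A : Finset (ZMod n), A.card = k →
      (∀ B ∈ translationOrbit n A, B.card = k) ∧
      A ∈ translationOrbit n A ∧
      (∀ B : Finset (ZMod n), B.card = k →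
        translationOrbit n A = translationOrbit n B ∨
          Disjoint (translationOrbit n A) (translationOrbit n B)) ∧
      (translationOrbit n A).card = n ∧
      IsHamiltonianBergeCycle n (translationOrbit n A) := by
  letI : NeZero n := ⟨hp.ne_zero⟩
  haveI : Fact n.Prime := ⟨hp⟩
  intro A hAcard
  have hAne : A.Nonempty := Finset.card_pos.mp (by omega)
  have hAlt : A.card < n := by omega
  have hinj := trans_inj hp A hAne hAlt
  -- translates have the same card
  have hcardB : ∀ B ∈ translationOrbit n A, B.card = k := by
    intro B hB
    simp only [translationOrbit, Finset.mem_image, Finset.mem_univ, true_and] at hB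
    obtain ⟨c, rfl⟩ := hB
    rw [Finset.card_image_of_injective _ (add_left_injective c)]
    exact hAcard
  refine ⟨hcardB, ?_, ?_, ?_, ?_⟩
  · -- A ∈ orbit
    simp only [translationOrbit, Finset.mem_image, Finset.mem_univ, true_and]
    exact ⟨0, by simp⟩
  · -- equal or disjoint
    intro B hBcard
    by_cases hdis : Disjoint (translationOrbit n A) (translationOrbit n B)
    · exact Or.inr hdis
    · left
      rw [Finset.not_disjoint_iff] at hdis
      obtain ⟨C, hCA, hCB⟩ := hdis
      simp only [translationOrbit, Finset.mem_image, Finset.mem_univ, true_and] at hCA hCB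
      obtain ⟨c, rfl⟩ := hCA
      obtain ⟨c', hc'⟩ := hCB
      show translationOrbit n A = translationOrbit n B
      unfold translationOrbit
      rw [← orbit_trans A c, ← hc', orbit_trans]
  · -- card = n
    rw [translationOrbit, Finset.card_image_of_injective _ hinj, Finset.card_univ, ZMod.card]
  · -- Hamiltonian Berge cycle
    obtain ⟨a, ha, b, hb, hab⟩ := Finset.one_lt_card.mp (by omega : 1 < A.card)
    set d : ZMod n := b - a with hd
    have hdne : d ≠ 0 := sub_ne_zero.mpr hab.symm
    refine ⟨fun j => j * d, fun j => Finset.image (· + (j * d - a)) A, ?_, ?_, ?_, ?_, ?_⟩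
    · exact Finite.injective_iff_bijective.mp (mul_left_injective₀ hdne)
    · intro j j' h
      have h1 := hinj h
      have h2 : j * d = j' * d := by
        have := congrArg (· + a) h1
        simpa using this
      exact mul_left_injective₀ hdne h2
    · intro j
      simp only [translationOrbit, Finset.mem_image, Finset.mem_univ, true_and]
      exact ⟨j * d - a, rfl⟩
    · intro B hB
      simp only [translationOrbit, Finset.mem_image, Finset.mem_univ, true_and] at hB
      obtain ⟨c, rfl⟩ := hB
      refine ⟨(c + a) * d⁻¹, ?_⟩
      show Finset.image (· + ((c + a) * d⁻¹ * d - a)) A = Finset.image (· + c) A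
      have e : (c + a) * d⁻¹ * d - a = c := by
        rw [mul_assoc, inv_mul_cancel₀ hdne, mul_one]; ring
      rw [e]
    · intro j
      constructor
      · have := Finset.mem_image_of_mem (· + (j * d - a)) ha
        simpa using this
      · have := Finset.mem_image_of_mem (· + (j * d - a)) hb
        have e : b + (j * d - a) = (j + 1) * d := by rw [hd]; ring
        show (j + 1) * d ∈ Finset.image (fun x => x + (j * d - a)) A
        rw [← e]
        exact this
end
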